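/- arXiv:1804.07220 — 2 statements merged into one kernel-verified Lean document; each statement's English description precedes it below -/
import Mathlib

section
/- Let M be a nonnegative square matrix indexed by a finite set V such that every row sum of M is at most 1 (M is substochastic). Suppose that in the directed graph on V with an edge (i,j) whenever M_{ij} > 0, every node has a path to some 'deficiency' node i whose row sum satisfies sum_j M_{ij} < 1. Then the spectral radius of M is strictly less than 1 (M is Schur stable). -/
open Matrix Finset

/-- A nonnegative substochastic matrix such that every node has a path
(in the graph with edges where the entry is positive) to a deficiency node
(a row summing to strictly less than 1) is Schur stable. -/
theorem substochastic_path_to_deficiency_schur_stable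
    {V : Type*} [Fintype V] [DecidableEq V] [Nonempty V]
    (M : Matrix V V ℝ)
    (hnonneg : ∀ i j, 0 ≤ M i j)
    (hsub : ∀ i, ∑ j, M i j ≤ 1)
    (hpath : ∀ ℓ : V, ∃ i : V,
      Relation.ReflTransGen (fun a b => 0 < M a b) ℓ i ∧ ∑ j, M i j < 1) :
    ∀ μ ∈ spectrum ℂ (M.map (Complex.ofReal)), ‖μ‖ < 1 := by
  intro μ hμ
  by_contra hge
  push_neg at hge
  -- obtain eigenvector
  rw [← AlgEquiv.spectrum_eq (Matrix.toLinAlgEquiv' (n := V) (R := ℂ)),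
      ← Module.End.hasEigenvalue_iff_mem_spectrum] at hμ
  obtain ⟨v, hve, hv0⟩ := hμ.exists_hasEigenvector
  have hve : (M.map Complex.ofReal).mulVec v = μ • v := by
    simpa [Matrix.toLinAlgEquiv'_apply, Matrix.toLin'_apply] using hve
  set a : V → ℝ := fun i => ‖v i‖ with ha
  obtain ⟨i0, -, hi0⟩ := Finset.exists_max_image univ a univ_nonempty
  set c := a i0 with hcdef
  have haj : ∀ j, a j ≤ c := fun j => hi0 j (mem_univ j)
  have hc : 0 < c := by
    obtain ⟨j, hj⟩ := Function.ne_iff.mp hv0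
    have : 0 < a j := by simpa [ha] using norm_pos_iff.mpr hj
    exact lt_of_lt_of_le this (haj j)
  -- key inequality
  have key : ∀ k, ‖μ‖ * a k ≤ ∑ j, M k j * a j := by
    intro k
    have h1 : μ * v k = ∑ j, (M k j : ℂ) * v j := by
      have := congrFun hve k
      simpa [Matrix.mulVec, dotProduct, Matrix.map_apply] using this.symm
    calc ‖μ‖ * a k = ‖μ * v k‖ := by rw [norm_mul]
      _ = ‖∑ j, (M k j : ℂ) * v j‖ := by rw [h1]
      _ ≤ ∑ j, ‖(M k j : ℂ) * v j‖ := norm_sum_le _ _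
      _ = ∑ j, M k j * a j := by
          refine Finset.sum_congr rfl fun j _ => ?_
          rw [norm_mul, Complex.norm_real, Real.norm_of_nonneg (hnonneg k j)]
  -- propagation: if a k = c then all out-neighbors j have a j = c
  have prop : ∀ k, a k = c → ∀ j, 0 < M k j → a j = c := by
    intro k hk j hMkj
    by_contra hne
    have hjc : a j < c := lt_of_le_of_ne (haj j) hne
    have hlt : ∑ l, M k l * a l < ∑ l, M k l * c := by
      refine Finset.sum_lt_sum (fun l _ => mul_le_mul_of_nonneg_left (haj l) (hnonneg k l))
        ⟨j, mem_univ j, mul_lt_mul_of_pos_left hjc hMkj⟩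
    have : c < c := by
      calc c = 1 * c := (one_mul c).symm
        _ ≤ ‖μ‖ * a k := by rw [hk]; exact mul_le_mul_of_nonneg_right hge hc.le
        _ ≤ ∑ l, M k l * a l := key k
        _ < ∑ l, M k l * c := hlt
        _ = (∑ l, M k l) * c := (Finset.sum_mul _ _ _).symm
        _ ≤ 1 * c := mul_le_mul_of_nonneg_right (hsub k) hc.le
        _ = c := one_mul c
    exact lt_irrefl c this
  -- follow the path from i0 to a deficiency node
  obtain ⟨i, hreach, hdef⟩ := hpath i0
  have hic : a i = c := by
    clear hdef
    induction hreach with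
    | refl => rfl
    | tail _ hbc ih => exact prop _ ih _ hbc
  have : c < c := by
    calc c = 1 * c := (one_mul c).symm
      _ ≤ ‖μ‖ * a i := by rw [hic]; exact mul_le_mul_of_nonneg_right hge hc.le
      _ ≤ ∑ l, M i l * a l := key i
      _ ≤ ∑ l, M i l * c := Finset.sum_le_sum
            (fun l _ => mul_le_mul_of_nonneg_left (haj l) (hnonneg i l))
      _ = (∑ l, M i l) * c := (Finset.sum_mul _ _ _).symm
      _ < 1 * c := mul_lt_mul_of_pos_right hdef hc
      _ = c := one_mul c
  exact lt_irrefl c this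
end

section
/- With Ā = (1−β)I + βΛ(I − D^{-1}(I − W)) as above, if the graph associated with W is such that every node has a path to some node i with λ_i < 1, then Ā is Schur stable and its spectral radius satisfies sr(Ā) ≤ 1 − β + β·λ_max, where λ_max = max_i λ_i. -/
open Matrix Finset

/-- If every node of the graph of `W` has a path to a node `i` with
`λᵢ < 1`, then `Ā = (1−β)I + βΛ(I − D⁻¹(I − W))` is Schur stable with spectral
radius at most `1 − β + β·λ_max`. -/
theorem abar_schur_stable
    {V : Type*} [Fintype V] [DecidableEq V] [Nonempty V]
    (W : Matrix V V ℝ) (lam : V → ℝ) (d : V → ℕ) (β : ℝ)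
    (hWnonneg : ∀ i j, 0 ≤ W i j)
    (hWrow : ∀ i, ∑ j, W i j = 1)
    (hd : ∀ i, d i = Nat.card {j : V // j ≠ i ∧ 0 < W i j})
    (hd1 : ∀ i, 1 ≤ d i)
    (hlam0 : ∀ i, 0 ≤ lam i) (hlam1 : ∀ i, lam i ≤ 1)
    (hβ0 : 0 < β) (hβ1 : β ≤ 1)
    (hpath : ∀ ℓ : V, ∃ i : V,
      Relation.ReflTransGen (fun a b => 0 < W a b) ℓ i ∧ lam i < 1)
    (Abar : Matrix V V ℝ)
    (hAbar : Abar = (1 - β) • (1 : Matrix V V ℝ) +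
      β • (Matrix.diagonal lam *
        ((1 : Matrix V V ℝ) -
          Matrix.diagonal (fun i => ((d i : ℝ))⁻¹) * ((1 : Matrix V V ℝ) - W))))
    (lmax : ℝ)
    (hlmax : lmax = Finset.univ.sup' Finset.univ_nonempty lam) :
    ∀ μ ∈ spectrum ℂ (Abar.map (Complex.ofReal)),
      ‖μ‖ < 1 ∧ ‖μ‖ ≤ 1 - β + β * lmax := by
  intro μ hμ
  -- helpers about d
  have hdpos : ∀ i, (0:ℝ) < (d i : ℝ) := by
    intro i; exact_mod_cast Nat.lt_of_lt_of_le Nat.zero_lt_one (hd1 i)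
  have hdinv_pos : ∀ i, (0:ℝ) < ((d i : ℝ))⁻¹ := fun i => inv_pos.2 (hdpos i)
  have hdinv_le1 : ∀ i, ((d i : ℝ))⁻¹ ≤ 1 := by
    intro i
    have h1 : (1:ℝ) ≤ (d i : ℝ) := by exact_mod_cast hd1 i
    exact inv_le_one_of_one_le₀ h1
  -- entry formula
  have hentry : ∀ i j, Abar i j =
      (if i = j then 1 - β + β * lam i - β * lam i * ((d i : ℝ))⁻¹ else 0)
        + β * lam i * ((d i : ℝ))⁻¹ * W i j := by
    intro i j
    subst hAbar
    simp only [Matrix.add_apply, Matrix.smul_apply, Matrix.sub_apply,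
      Matrix.diagonal_mul, Matrix.one_apply, smul_eq_mul]
    split_ifs with h <;> ring
  -- nonnegativity of entries
  have hA0 : ∀ i j, 0 ≤ Abar i j := by
    intro i j
    rw [hentry i j]
    by_cases h : i = j
    · rw [if_pos h]
      have h1 := hdinv_le1 i
      have h2 := (hdinv_pos i).le
      have h3 := hlam0 i
      have h4 := hWnonneg i j
      nlinarith [mul_nonneg (mul_nonneg hβ0.le h3) (sub_nonneg.2 h1),
        mul_nonneg (mul_nonneg (mul_nonneg hβ0.le h3) h2) h4]
    · rw [if_neg h]
      have : 0 ≤ β * lam i * ((d i : ℝ))⁻¹ :=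
        mul_nonneg (mul_nonneg hβ0.le (hlam0 i)) (hdinv_pos i).le
      simpa using mul_nonneg this (hWnonneg i j)
  -- row sums
  have hrow : ∀ i, ∑ j, Abar i j = 1 - β + β * lam i := by
    intro i
    simp only [hentry]
    rw [Finset.sum_add_distrib, Finset.sum_ite_eq univ i, if_pos (mem_univ i),
      ← Finset.mul_sum, hWrow i, mul_one]
    ring
  -- eigenvector
  rw [spectrum.mem_iff, Algebra.algebraMap_eq_smul_one, Matrix.isUnit_iff_isUnit_det,
    isUnit_iff_ne_zero, not_ne_iff] at hμ
  obtain ⟨v, hv0, hv⟩ := Matrix.exists_mulVec_eq_zero_iff.2 hμ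
  rw [Matrix.sub_mulVec, sub_eq_zero, Matrix.smul_mulVec, Matrix.one_mulVec] at hv
  have heig : ∀ ℓ, μ * v ℓ = ∑ j, (Abar ℓ j : ℂ) * v j := by
    intro ℓ
    have h := congrFun hv ℓ
    simp only [Matrix.mulVec, dotProduct, Matrix.map_apply, Pi.smul_apply,
      smul_eq_mul] at h
    exact h
  -- the maximum modulus
  set m := Finset.univ.sup' Finset.univ_nonempty (fun j => ‖v j‖) with hm
  have hm_le : ∀ j, ‖v j‖ ≤ m := fun j => Finset.le_sup' (fun j => ‖v j‖) (mem_univ j)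
  have hmpos : 0 < m := by
    obtain ⟨j, hj⟩ := Function.ne_iff.1 hv0
    exact lt_of_lt_of_le (norm_pos_iff.2 hj) (hm_le j)
  -- key inequalities
  have keyA : ∀ ℓ, ‖μ‖ * ‖v ℓ‖ ≤ ∑ j, Abar ℓ j * ‖v j‖ := by
    intro ℓ
    calc ‖μ‖ * ‖v ℓ‖ = ‖μ * v ℓ‖ := (norm_mul _ _).symm
      _ = ‖∑ j, (Abar ℓ j : ℂ) * v j‖ := by rw [heig ℓ]
      _ ≤ ∑ j, ‖(Abar ℓ j : ℂ) * v j‖ := norm_sum_le _ _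
      _ = ∑ j, Abar ℓ j * ‖v j‖ := by
          refine Finset.sum_congr rfl fun j _ => ?_
          rw [norm_mul, Complex.norm_real, Real.norm_eq_abs, abs_of_nonneg (hA0 ℓ j)]
  have keyB : ∀ ℓ, ∑ j, Abar ℓ j * ‖v j‖ ≤ (1 - β + β * lam ℓ) * m := by
    intro ℓ
    calc ∑ j, Abar ℓ j * ‖v j‖ ≤ ∑ j, Abar ℓ j * m :=
          Finset.sum_le_sum fun j _ => mul_le_mul_of_nonneg_left (hm_le j) (hA0 ℓ j)
      _ = (1 - β + β * lam ℓ) * m := by rw [← Finset.sum_mul, hrow ℓ]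
  have hlam_le : ∀ i, lam i ≤ lmax := by
    intro i; rw [hlmax]; exact Finset.le_sup' lam (mem_univ i)
  obtain ⟨ℓ0, -, hℓ0⟩ := Finset.exists_mem_eq_sup' Finset.univ_nonempty (fun j => ‖v j‖)
  -- second bound
  have hmℓ0 : ‖v ℓ0‖ = m := by rw [hm]; exact hℓ0.symm
  have h2 : ‖μ‖ ≤ 1 - β + β * lmax := by
    have hk := le_trans (keyA ℓ0) (keyB ℓ0)
    rw [hmℓ0] at hk
    have hb : lam ℓ0 ≤ lmax := hlam_le ℓ0
    nlinarith [hmpos, hk,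
      mul_le_mul_of_nonneg_right (mul_le_mul_of_nonneg_left hb hβ0.le) hmpos.le]
  -- equality analysis at a maximal node
  have hstep : ∀ ℓ, 1 ≤ ‖μ‖ → ‖v ℓ‖ = m →
      lam ℓ = 1 ∧ ∀ j, 0 < W ℓ j → ‖v j‖ = m := by
    intro ℓ hμ1 hℓ
    have e1 : m ≤ ∑ j, Abar ℓ j * ‖v j‖ := by
      have := keyA ℓ
      rw [hℓ] at this
      nlinarith [hmpos]
    have e2 := keyB ℓ
    have e3 : (1 - β + β * lam ℓ) * m ≤ m := by
      nlinarith [hmpos,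
        mul_le_mul_of_nonneg_right (mul_le_mul_of_nonneg_left (hlam1 ℓ) hβ0.le) hmpos.le]
    have hS : ∑ j, Abar ℓ j * ‖v j‖ = ∑ j, Abar ℓ j * m := by
      rw [← Finset.sum_mul, hrow ℓ]
      linarith
    have hlamℓ : lam ℓ = 1 := by
      refine le_antisymm (hlam1 ℓ) ?_
      nlinarith [e1, e2, mul_pos hβ0 hmpos]
    have hterm := (Finset.sum_eq_sum_iff_of_le
      (fun j (_ : j ∈ univ) => mul_le_mul_of_nonneg_left (hm_le j) (hA0 ℓ j))).1 hS
    refine ⟨hlamℓ, fun j hWj => ?_⟩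
    by_cases hje : ℓ = j
    · rw [← hje]; exact hℓ
    · have hApos : 0 < Abar ℓ j := by
        rw [hentry ℓ j, if_neg hje, hlamℓ]
        have : 0 < β * 1 * ((d ℓ : ℝ))⁻¹ := by
          have := hdinv_pos ℓ; nlinarith
        nlinarith
      have := hterm j (mem_univ j)
      exact mul_left_cancel₀ (ne_of_gt hApos) this
  -- propagation along paths
  have hprop : ∀ a b, Relation.ReflTransGen (fun a b => 0 < W a b) a b →
      1 ≤ ‖μ‖ → ‖v a‖ = m → ‖v b‖ = m := by
    intro a b h hμ1
    induction h with
    | refl => exact id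
    | tail _ e ih => intro ha; exact (hstep _ hμ1 (ih ha)).2 _ e
  have h1 : ‖μ‖ < 1 := by
    by_contra hcon
    push_neg at hcon
    obtain ⟨i, hpi, hlami⟩ := hpath ℓ0
    have hvi : ‖v i‖ = m := hprop ℓ0 i hpi hcon hℓ0.symm
    have := (hstep i hcon hvi).1
    linarith
  exact ⟨h1, h2⟩
end
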